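/- arXiv:2011.08132 — 7 statements merged into one kernel-verified Lean document; each statement's English description precedes it below -/
import Mathlib

section
/- Every Hermitian tensor is a real linear combination of rank-1 Hermitian tensors: for every Hermitian tensor H of format (n_1,…,n_m) there exist an integer r ≥ 0, real scalars λ_1,…,λ_r, and vectors u_i^j ∈ ℂ^{n_j} (i = 1,…,r, j = 1,…,m) such that H = Σ_{i=1}^r λ_i [u_i^1,…,u_i^m]_⊗h. -/
/-!
Each matrix unit `E_ab` is a complex combination of four matrices `v vᴴ`, so taking tensor
products, each tensor unit `E_IJ`, and hence every tensor, is a complex combination of rank-1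
Hermitian tensors `∑ μᵢ Rᵢ`. If the tensor is Hermitian it equals its conjugate transpose
`∑ conj μᵢ Rᵢ`, and averaging the two expressions gives `∑ (re μᵢ) Rᵢ`.
-/

open Finset ComplexConjugate

noncomputable section

section MatrixUnit

variable {α : Type*} [DecidableEq α]

def matrixUnitCoeff : Fin 4 → ℂ :=
  ![-(1 + Complex.I) / 2, -(1 + Complex.I) / 2, 1 / 2, Complex.I / 2]

def matrixUnitVec (a b : α) : Fin 4 → α → ℂ :=
  ![Pi.single a 1, Pi.single b 1, Pi.single a 1 + Pi.single b 1,
    Pi.single a 1 + Complex.I • Pi.single b 1]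

-- `E_ab = ½ vvᴴ + (i/2) wwᴴ - ((1+i)/2) (e_a e_aᴴ + e_b e_bᴴ)`
-- for `v = e_a + e_b` and `w = e_a + i e_b`.
theorem sum_matrixUnitCoeff_mul_conj (a b x y : α) :
    ∑ t, matrixUnitCoeff t * (matrixUnitVec a b t x * conj (matrixUnitVec a b t y)) =
      if x = a ∧ y = b then 1 else 0 := by
  rw [← mul_one (1 : ℂ), ← ite_zero_mul_ite_zero]
  simp only [Fin.sum_univ_four, matrixUnitCoeff, matrixUnitVec, Matrix.cons_val_zero,
    Matrix.cons_val_one, Matrix.cons_val_two, Matrix.cons_val_three,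
    Matrix.head_cons, Matrix.tail_cons, Pi.add_apply, Pi.smul_apply, smul_eq_mul, map_add,
    map_mul, Complex.conj_I, Pi.single_apply, apply_ite conj, map_one, map_zero]
  set p : ℂ := if x = a then 1 else 0
  set q : ℂ := if x = b then 1 else 0
  set p' : ℂ := if y = a then 1 else 0
  set q' : ℂ := if y = b then 1 else 0
  linear_combination ((q * p' - p * q') / 2 - Complex.I * q * q' / 2) * Complex.I_sq

end MatrixUnit

section RankOneHermitian

variable {K : Type*} [Fintype K] {ι : K → Type*}

def rankOneHermitian (u : ∀ k, ι k → ℂ) (I J : ∀ k, ι k) : ℂ :=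
  ∏ k, u k (I k) * conj (u k (J k))

theorem rankOneHermitian_swap (u : ∀ k, ι k → ℂ) (I J : ∀ k, ι k) :
    rankOneHermitian u J I = conj (rankOneHermitian u I J) := by
  simp only [rankOneHermitian, map_prod, map_mul, Complex.conj_conj, mul_comm]

variable [DecidableEq K] [∀ k, DecidableEq (ι k)]

theorem ite_and_eq_sum_rankOneHermitian (I₀ J₀ I J : ∀ k, ι k) :
    (if I = I₀ ∧ J = J₀ then 1 else 0 : ℂ) =
      ∑ T : K → Fin 4, (∏ k, matrixUnitCoeff (T k)) *
        rankOneHermitian (fun k => matrixUnitVec (I₀ k) (J₀ k) (T k)) I J := by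
  calc (if I = I₀ ∧ J = J₀ then 1 else 0 : ℂ)
      = ∏ k, ∑ t, matrixUnitCoeff t * (matrixUnitVec (I₀ k) (J₀ k) t (I k) *
          conj (matrixUnitVec (I₀ k) (J₀ k) t (J k))) := by
        simp only [sum_matrixUnitCoeff_mul_conj, Fintype.prod_boole, funext_iff, forall_and]
    _ = _ := by
        rw [Fintype.prod_sum]
        simp only [rankOneHermitian, prod_mul_distrib]

variable [∀ k, Fintype (ι k)]

theorem eq_sum_mul_rankOneHermitian (T : (∀ k, ι k) → (∀ k, ι k) → ℂ)
    (I J : ∀ k, ι k) :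
    T I J = ∑ p : ((∀ k, ι k) × (∀ k, ι k)) × (K → Fin 4),
      T p.1.1 p.1.2 * (∏ k, matrixUnitCoeff (p.2 k)) *
        rankOneHermitian (fun k => matrixUnitVec (p.1.1 k) (p.1.2 k) (p.2 k)) I J := by
  simp [Fintype.sum_prod_type, mul_assoc, ← mul_sum, ← ite_and_eq_sum_rankOneHermitian, ite_and]

theorem exists_sum_mul_rankOneHermitian (T : (∀ k, ι k) → (∀ k, ι k) → ℂ) :
    ∃ (r : ℕ) (μ : Fin r → ℂ) (u : Fin r → ∀ k, ι k → ℂ),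
      ∀ I J, T I J = ∑ i, μ i * rankOneHermitian (u i) I J := by
  let e := (Fintype.equivFin (((∀ k, ι k) × (∀ k, ι k)) × (K → Fin 4))).symm
  refine ⟨_, fun i => T (e i).1.1 (e i).1.2 * ∏ k, matrixUnitCoeff ((e i).2 k),
    fun i k => matrixUnitVec ((e i).1.1 k) ((e i).1.2 k) ((e i).2 k), fun I J => ?_⟩
  rw [eq_sum_mul_rankOneHermitian T I J]
  exact (e.sum_comp _).symm

end RankOneHermitian

theorem eq_sum_re_mul_of_conj_swap {σ β : Type*} [Fintype β] {H : σ → σ → ℂ}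
    {R : β → σ → σ → ℂ} {μ : β → ℂ} (hH : ∀ I J, H I J = conj (H J I))
    (hR : ∀ i I J, R i J I = conj (R i I J)) (hHR : ∀ I J, H I J = ∑ i, μ i * R i I J)
    (I J : σ) : H I J = ∑ i, ((μ i).re : ℂ) * R i I J := by
  have hconj : H I J = ∑ i, conj (μ i) * R i I J := by
    rw [hH, hHR, map_sum]
    exact sum_congr rfl fun i _ => by rw [map_mul, hR, Complex.conj_conj]
  calc H I J = ((∑ i, μ i * R i I J) + ∑ i, conj (μ i) * R i I J) / 2 := by
        rw [← hHR, ← hconj]; ring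
    _ = ∑ i, ((μ i).re : ℂ) * R i I J := by
        rw [← sum_add_distrib, sum_div]
        refine sum_congr rfl fun i _ => ?_
        rw [← add_mul, Complex.add_conj]
        push_cast
        ring

end

theorem every_hermitian_tensor_has_hermitian_decomposition_general
    (m : ℕ) (n : Fin m → ℕ)
    (H : ((k : Fin m) → Fin (n k)) → ((k : Fin m) → Fin (n k)) → ℂ)
    (hH : ∀ I J, H I J = (starRingEnd ℂ) (H J I)) :
    ∃ (r : ℕ) (lam : Fin r → ℝ) (u : (i : Fin r) → (k : Fin m) → Fin (n k) → ℂ),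
      ∀ I J, H I J =
        ∑ i, (lam i : ℂ) * ∏ k, u i k (I k) * (starRingEnd ℂ) (u i k (J k)) := by
  obtain ⟨r, μ, u, hHu⟩ := exists_sum_mul_rankOneHermitian H
  exact ⟨r, fun i => (μ i).re, u,
    eq_sum_re_mul_of_conj_swap hH (fun i => rankOneHermitian_swap (u i)) hHu⟩

/-- Every Hermitian tensor of format `(n 0, …, n (m-1))` is a real linear combination
of rank-1 Hermitian tensors. -/
theorem every_hermitian_tensor_has_hermitian_decomposition
    (m : ℕ) (hm : 1 ≤ m) (n : Fin m → ℕ) (hn : ∀ k, 1 ≤ n k)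
    (H : ((k : Fin m) → Fin (n k)) → ((k : Fin m) → Fin (n k)) → ℂ)
    (hH : ∀ I J, H I J = (starRingEnd ℂ) (H J I)) :
    ∃ (r : ℕ) (lam : Fin r → ℝ) (u : (i : Fin r) → (k : Fin m) → Fin (n k) → ℂ),
      ∀ I J, H I J =
        ∑ i, (lam i : ℂ) * ∏ k, u i k (I k) * (starRingEnd ℂ) (u i k (J k)) :=
  every_hermitian_tensor_has_hermitian_decomposition_general m n H hH
end

section
/- A Hermitian tensor H of format (n_1,…,n_m) is separable if and only if there exist an integer s ≥ 0 and positive semidefinite Hermitian matrices B_k^i ∈ ℂ^{n_k×n_k} (i = 1,…,s, k = 1,…,m) such that H_{IJ} = Σ_{i=1}^s ∏_{k=1}^m (B_k^i)_{i_k j_k} for all multi-indices I = (i_1,…,i_m), J = (j_1,…,j_m). -/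
open scoped ComplexOrder

/-!
A rank-one Hermitian tensor `[u_1, …, u_m]_⊗h` is the entrywise product of the rank-one positive
semidefinite matrices `u_k u_kᴴ`, which gives one direction. Conversely, every positive
semidefinite matrix is a sum of such rank-one matrices `v vᴴ`; substituting these sums into
`∏_k (B_k)_{i_k j_k}` and expanding the product over `k` writes each summand of the decomposition
as a finite sum of rank-one Hermitian tensors.
-/

open Matrix

theorem Matrix.prod_sum_vecMulVec_star_apply {R ι : Type*} [CommSemiring R] [StarRing R]
    [Fintype ι] [DecidableEq ι] {d : ι → Type*} {m : ι → ℕ} (v : ∀ k, Fin (m k) → d k → R)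
    (I J : ∀ k, d k) :
    ∏ k, (∑ j, vecMulVec (v k j) (star (v k j))) (I k) (J k) =
      ∑ p : ∀ k, Fin (m k), ∏ k, v k (p k) (I k) * star (v k (p k) (J k)) := by
  simp only [Matrix.sum_apply, vecMulVec_apply, Pi.star_apply]
  exact Finset.prod_univ_sum _ _

theorem exists_sum_rankOne_eq_sum_prod_of_posSemidef {𝕜 ι σ : Type*} [RCLike 𝕜] [Fintype ι]
    [DecidableEq ι] [Fintype σ] {d : ι → Type*} [∀ k, Fintype (d k)]
    (B : σ → ∀ k, Matrix (d k) (d k) 𝕜) (hB : ∀ i k, (B i k).PosSemidef) :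
    ∃ (r : ℕ) (u : Fin r → ∀ k, d k → 𝕜), ∀ I J : ∀ k, d k,
      ∑ i, ∏ k, B i k (I k) (J k) = ∑ j, ∏ k, u j k (I k) * star (u j k (J k)) := by
  choose m v hv using fun i k => posSemidef_iff_eq_sum_vecMulVec.mp (hB i k)
  let e := Fintype.equivFin ((i : σ) × ∀ k, Fin (m i k))
  refine ⟨_, fun j k => v (e.symm j).1 k ((e.symm j).2 k), fun I J => ?_⟩
  rw [e.symm.sum_comp (fun q => ∏ k, v q.1 k (q.2 k) (I k) * star (v q.1 k (q.2 k) (J k))),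
    Fintype.sum_sigma]
  refine Finset.sum_congr rfl fun i _ => ?_
  simp_rw [hv i]
  exact prod_sum_vecMulVec_star_apply (v i) I J

theorem separable_iff_psd_matrix_decomposition_general
    (m : ℕ) (n : Fin m → ℕ)
    (H : ((k : Fin m) → Fin (n k)) → ((k : Fin m) → Fin (n k)) → ℂ) :
    (∃ (r : ℕ) (u : (i : Fin r) → (k : Fin m) → Fin (n k) → ℂ),
        ∀ I J, H I J = ∑ i, ∏ k, u i k (I k) * (starRingEnd ℂ) (u i k (J k)))
      ↔
    (∃ (s : ℕ) (B : (i : Fin s) → (k : Fin m) → Matrix (Fin (n k)) (Fin (n k)) ℂ),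
        (∀ i k, (B i k).PosSemidef) ∧
        ∀ I J, H I J = ∑ i, ∏ k, B i k (I k) (J k)) := by
  constructor
  · rintro ⟨r, u, hu⟩
    exact ⟨r, fun i k => vecMulVec (u i k) (star (u i k)),
      fun i k => posSemidef_vecMulVec_self_star _, hu⟩
  · rintro ⟨s, B, hB, hH⟩
    obtain ⟨r, u, hu⟩ := exists_sum_rankOne_eq_sum_prod_of_posSemidef B hB
    exact ⟨r, u, fun I J => (hH I J).trans (hu I J)⟩

/-- A Hermitian tensor is separable iff it admits a decomposition as a sum of
Kronecker-type products of positive semidefinite Hermitian matrices. -/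
theorem separable_iff_psd_matrix_decomposition
    (m : ℕ) (hm : 1 ≤ m) (n : Fin m → ℕ) (hn : ∀ k, 1 ≤ n k)
    (H : ((k : Fin m) → Fin (n k)) → ((k : Fin m) → Fin (n k)) → ℂ)
    (hH : ∀ I J, H I J = (starRingEnd ℂ) (H J I)) :
    (∃ (r : ℕ) (u : (i : Fin r) → (k : Fin m) → Fin (n k) → ℂ),
        ∀ I J, H I J = ∑ i, ∏ k, u i k (I k) * (starRingEnd ℂ) (u i k (J k)))
      ↔
    (∃ (s : ℕ) (B : (i : Fin s) → (k : Fin m) → Matrix (Fin (n k)) (Fin (n k)) ℂ),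
        (∀ i k, (B i k).PosSemidef) ∧
        ∀ I J, H I J = ∑ i, ∏ k, B i k (I k) (J k)) :=
  separable_iff_psd_matrix_decomposition_general m n H
end

section
/- The separable cone and the psd cone of Hermitian tensors are dual to each other: (a) a Hermitian tensor A of format (n_1,…,n_m) satisfies Re⟨A,B⟩ ≥ 0 for every separable Hermitian tensor B if and only if A is positive semidefinite; (b) a Hermitian tensor B satisfies Re⟨A,B⟩ ≥ 0 for every positive semidefinite Hermitian tensor A if and only if B is separable. -/
/-
The psd tensors are by definition those pairing nonnegatively with every rank-one tensor, hence
with every separable one; this gives (a) and one half of (b). For the other half, the separable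
tensors form a closed convex cone: it is the cone over the convex hull of the compact set of
rank-one tensors built from unit vectors, on which the trace is identically 1. If `B` is not
separable, Farkas' lemma yields a linear functional that is nonnegative on this cone and negative
at `B`. The nondegenerate pairing `Re ⟨·, ·⟩` represents it by a tensor `A`, and the Hermitian
part of `A` pairs with Hermitian tensors exactly as `A` does, so it is a psd tensor with
`Re ⟨A, B⟩ < 0`.
-/

namespace HermitianTensorDuality

variable {m : ℕ} {n : Fin m → ℕ}

/-- A complex array indexed by pairs of multi-indices is Hermitian. -/
def IsHerm (H : ((k : Fin m) → Fin (n k)) → ((k : Fin m) → Fin (n k)) → ℂ) : Prop :=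
  ∀ I J, H I J = (starRingEnd ℂ) (H J I)

/-- The rank-1 Hermitian tensor `[z_1, …, z_m]_⊗h`. -/
def rankOne (z : (k : Fin m) → Fin (n k) → ℂ) :
    ((k : Fin m) → Fin (n k)) → ((k : Fin m) → Fin (n k)) → ℂ :=
  fun I J => ∏ k, z k (I k) * (starRingEnd ℂ) (z k (J k))

/-- A Hermitian tensor is separable if it is a sum of rank-1 Hermitian tensors. -/
def IsSep (H : ((k : Fin m) → Fin (n k)) → ((k : Fin m) → Fin (n k)) → ℂ) : Prop :=
  ∃ (r : ℕ) (u : (i : Fin r) → (k : Fin m) → Fin (n k) → ℂ),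
    ∀ I J, H I J = ∑ i, rankOne (u i) I J

/-- The inner product `⟨A,B⟩ = ∑_{I,J} A_{IJ} conj(B_{IJ})`. -/
noncomputable def ip (A B : ((k : Fin m) → Fin (n k)) → ((k : Fin m) → Fin (n k)) → ℂ) : ℂ :=
  ∑ I, ∑ J, A I J * (starRingEnd ℂ) (B I J)

/-- A Hermitian tensor is positive semidefinite. -/
noncomputable def IsPsd (H : ((k : Fin m) → Fin (n k)) → ((k : Fin m) → Fin (n k)) → ℂ) : Prop :=
  ∀ z : (k : Fin m) → Fin (n k) → ℂ, 0 ≤ (ip H (rankOne z)).re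

end HermitianTensorDuality

section

open Set

theorem isCompact_convexHull {E : Type*} [AddCommGroup E] [Module ℝ E] [TopologicalSpace E]
    [ContinuousAdd E] [ContinuousSMul ℝ E] [FiniteDimensional ℝ E] {s : Set E}
    (hs : IsCompact s) : IsCompact (convexHull ℝ s) := by
  -- Carathéodory: a point of the hull is a convex combination of at most `finrank + 1` points
  have hcover : convexHull ℝ s = ⋃ k ∈ Finset.range (Module.finrank ℝ E + 2),
      (fun p : (Fin k → ℝ) × (Fin k → E) => ∑ i, p.1 i • p.2 i) ''
        (stdSimplex ℝ (Fin k) ×ˢ univ.pi fun _ => s) := by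
    refine Subset.antisymm (fun x hx => ?_) ?_
    · obtain ⟨ι, _, z, w, hzs, hz, hw, hw1, rfl⟩ := eq_pos_convex_span_of_mem_convexHull hx
      have hcard : Fintype.card ι < Module.finrank ℝ E + 2 := by
        have := Submodule.finrank_le (vectorSpan ℝ (range z))
        have := hz.card_le_finrank_succ
        omega
      let e := Fintype.equivFin ι
      refine mem_biUnion (Finset.mem_range.2 hcard) ⟨(w ∘ e.symm, z ∘ e.symm),
        ⟨⟨fun i => (hw _).le, ?_⟩, fun i _ => hzs (mem_range_self _)⟩, ?_⟩
      · simpa [e.symm.sum_comp w] using hw1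
      · exact e.symm.sum_comp fun i => w i • z i
    · refine iUnion₂_subset fun k _ => ?_
      rintro _ ⟨⟨w, z⟩, ⟨hw, hz⟩, rfl⟩
      exact (convex_convexHull ℝ s).sum_mem (fun i _ => hw.1 i) hw.2
        fun i _ => subset_convexHull ℝ s (hz i trivial)
  rw [hcover]
  exact (Finset.range _).isCompact_biUnion fun k _ =>
    ((isCompact_stdSimplex _ _).prod (isCompact_univ_pi fun _ => hs)).image (by fun_prop)

theorem Convex.isClosed_insert_zero_hull {E : Type*} [AddCommGroup E] [Module ℝ E]
    [TopologicalSpace E] [ContinuousSMul ℝ E] [T2Space E] {K : Set E} (hKc : Convex ℝ K)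
    (hK : IsCompact K) (ℓ : E →L[ℝ] ℝ) (hℓ : ∀ c ∈ K, ℓ c = 1) :
    IsClosed (insert 0 (ConvexCone.hull ℝ K : Set E)) := by
  refine isClosed_of_closure_subset fun x hx => ?_
  -- near `x` the cone is swept out by the compact family `t • c` with `t ≤ ℓ x + 1`
  set U := {y : E | ℓ y < ℓ x + 1}
  set D := insert 0 ((fun p : ℝ × E => p.1 • p.2) '' (Icc 0 (ℓ x + 1) ×ˢ K))
  have hD : IsCompact D := ((isCompact_Icc.prod hK).image continuous_smul).insert 0
  have hCD : insert 0 (ConvexCone.hull ℝ K : Set E) ∩ U ⊆ D := by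
    rintro y ⟨rfl | hy, hyU⟩
    · exact mem_insert 0 _
    · obtain ⟨t, ht, c, hc, rfl⟩ := (ConvexCone.mem_hull_of_convex hKc).1 hy
      have : ℓ (t • c) = t := by rw [map_smul, hℓ c hc, smul_eq_mul, mul_one]
      exact mem_insert_of_mem 0 ⟨(t, c), ⟨⟨ht.le, this ▸ hyU.le⟩, hc⟩, rfl⟩
  have hDC : D ⊆ insert 0 (ConvexCone.hull ℝ K : Set E) := by
    rintro _ (rfl | ⟨⟨t, c⟩, ⟨⟨ht, -⟩, hc⟩, rfl⟩)
    · exact mem_insert 0 _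
    rcases ht.eq_or_lt with rfl | ht
    · simp
    · exact mem_insert_of_mem 0 ((ConvexCone.mem_hull_of_convex hKc).2 ⟨t, ht, c, hc, rfl⟩)
  have hxD : x ∈ closure D := closure_mono (inter_comm _ U ▸ hCD)
    ((isOpen_lt ℓ.continuous continuous_const).inter_closure ⟨by simp, hx⟩)
  exact hDC (hD.isClosed.closure_subset hxD)

end

namespace HermitianTensorDuality

variable {m : ℕ} {n : Fin m → ℕ}

abbrev Tensor (m : ℕ) (n : Fin m → ℕ) :=
  ((k : Fin m) → Fin (n k)) → ((k : Fin m) → Fin (n k)) → ℂ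

noncomputable def reIp : Tensor m n →ₗ[ℝ] Tensor m n →ₗ[ℝ] ℝ :=
  LinearMap.mk₂ ℝ (fun A B => (ip A B).re)
    (fun A A' B => by simp [ip, add_mul, Finset.sum_add_distrib])
    (fun c A B => by simp [ip, Complex.real_smul, mul_assoc, ← Finset.mul_sum])
    (fun A B B' => by simp [ip, mul_add, Finset.sum_add_distrib])
    (fun c A B => by simp [ip, Complex.real_smul, mul_left_comm _ (c : ℂ), ← Finset.mul_sum])

@[simp]
lemma reIp_apply (A B : Tensor m n) : reIp A B = (ip A B).re := rfl

lemma re_ip_comm (A B : Tensor m n) : (ip B A).re = (ip A B).re := by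
  rw [← Complex.conj_re, ip, ip, map_sum]
  simp only [map_sum, map_mul, Complex.conj_conj, mul_comm]

lemma re_ip_self (A : Tensor m n) : (ip A A).re = ∑ I, ∑ J, ‖A I J‖ ^ 2 := by
  simp only [ip, Complex.mul_conj', Complex.re_sum]
  norm_cast

lemma reIp_nondegenerate : (reIp : LinearMap.BilinForm ℝ (Tensor m n)).Nondegenerate := by
  refine (LinearMap.BilinForm.nondegenerate_iff' reIp (fun A => ?_)
    ⟨fun A B => re_ip_comm B A⟩).2 fun A hA => ?_
  · rw [reIp_apply, re_ip_self]; positivity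
  · obtain ⟨I, J, hIJ⟩ : ∃ I J, A I J ≠ 0 := by
      by_contra! h; exact hA (funext₂ h)
    rw [reIp_apply, re_ip_self]
    exact Finset.sum_pos' (fun _ _ => by positivity) ⟨I, Finset.mem_univ _,
      Finset.sum_pos' (fun _ _ => by positivity) ⟨J, Finset.mem_univ _, by positivity⟩⟩

lemma exists_re_ip_eq (f : Module.Dual ℝ (Tensor m n)) : ∃ A, ∀ x, (ip A x).re = f x :=
  ⟨(LinearMap.BilinForm.toDual reIp reIp_nondegenerate).symm f,
    LinearMap.BilinForm.apply_toDual_symm_apply (hB := reIp_nondegenerate) f⟩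

def conjTranspose (A : Tensor m n) : Tensor m n := fun I J => (starRingEnd ℂ) (A J I)

lemma ip_conjTranspose {A x : Tensor m n} (hx : IsHerm x) :
    ip (conjTranspose A) x = (starRingEnd ℂ) (ip A x) := by
  have hx' : ∀ I J, (starRingEnd ℂ) (x I J) = x J I := fun I J => (hx J I).symm
  simp only [ip, conjTranspose, map_sum, map_mul, hx']
  exact Finset.sum_comm

noncomputable def hermPart (A : Tensor m n) : Tensor m n := (2⁻¹ : ℝ) • (A + conjTranspose A)

lemma isHerm_hermPart (A : Tensor m n) : IsHerm (hermPart A) := by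
  intro I J
  simp [hermPart, conjTranspose, Complex.real_smul, add_comm, map_ofNat]

lemma re_ip_hermPart (A : Tensor m n) {x : Tensor m n} (hx : IsHerm x) :
    (ip (hermPart A) x).re = (ip A x).re := by
  rw [← reIp_apply, hermPart, map_smul, map_add, LinearMap.smul_apply, LinearMap.add_apply,
    reIp_apply, reIp_apply, ip_conjTranspose hx, Complex.conj_re, smul_eq_mul]
  ring

lemma isHerm_rankOne (z : (k : Fin m) → Fin (n k) → ℂ) : IsHerm (rankOne z) := by
  intro I J
  simp only [rankOne, map_prod, map_mul, Complex.conj_conj, mul_comm]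

lemma rankOne_smul (c : Fin m → ℂ) (z : (k : Fin m) → Fin (n k) → ℂ) :
    rankOne (fun k => c k • z k) = (∏ k, ‖c k‖ ^ 2 : ℝ) • rankOne z := by
  funext I J
  simp only [rankOne, Pi.smul_apply, smul_eq_mul, map_mul, Complex.real_smul,
    Complex.ofReal_prod, ← Finset.prod_mul_distrib, Complex.ofReal_pow, ← Complex.mul_conj']
  exact Finset.prod_congr rfl fun k _ => by ring

lemma isSep_iff {B : Tensor m n} : IsSep B ↔
    ∃ (r : ℕ) (u : Fin r → (k : Fin m) → Fin (n k) → ℂ), B = ∑ i, rankOne (u i) := by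
  simp only [IsSep, funext_iff, Finset.sum_apply]

lemma isSep_rankOne (z : (k : Fin m) → Fin (n k) → ℂ) : IsSep (rankOne z) :=
  isSep_iff.2 ⟨1, fun _ => z, by simp⟩

lemma isSep_zero : IsSep (0 : Tensor m n) :=
  isSep_iff.2 ⟨0, Fin.elim0, by simp⟩

lemma IsSep.add {B B' : Tensor m n} (hB : IsSep B) (hB' : IsSep B') : IsSep (B + B') := by
  obtain ⟨r, u, rfl⟩ := isSep_iff.1 hB
  obtain ⟨r', u', rfl⟩ := isSep_iff.1 hB'
  exact isSep_iff.2 ⟨r + r', Fin.append u u', by simp [Fin.sum_univ_add]⟩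

lemma IsSep.smul [NeZero m] {B : Tensor m n} (hB : IsSep B) {t : ℝ} (ht : 0 ≤ t) :
    IsSep (t • B) := by
  obtain ⟨r, u, rfl⟩ := isSep_iff.1 hB
  obtain ⟨c, hc⟩ : ∃ c : Fin m → ℂ, ∏ k, ‖c k‖ ^ 2 = t := by
    refine ⟨Function.update 1 0 (Real.sqrt t : ℂ), ?_⟩
    rw [Finset.prod_eq_single 0 (fun k _ hk => by simp [Function.update_of_ne hk]) (by simp)]
    simp [Real.sq_sqrt ht]
  refine isSep_iff.2 ⟨r, fun i k => c k • u i k, ?_⟩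
  simp only [rankOne_smul, hc, Finset.smul_sum]

lemma convex_setOf_isSep [NeZero m] : Convex ℝ {B : Tensor m n | IsSep B} :=
  fun _ hB _ hB' _ _ ha hb _ => (hB.smul ha).add (hB'.smul hb)

lemma IsPsd.re_ip_nonneg {A B : Tensor m n} (hA : IsPsd A) (hB : IsSep B) : 0 ≤ (ip A B).re := by
  obtain ⟨r, u, rfl⟩ := isSep_iff.1 hB
  rw [← reIp_apply, map_sum]
  exact Finset.sum_nonneg fun i _ => hA (u i)

noncomputable def traceRe : Tensor m n →ₗ[ℝ] ℝ where
  toFun A := (∑ I, A I I).re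
  map_add' A B := by simp [Finset.sum_add_distrib]
  map_smul' c A := by simp [Complex.real_smul, ← Finset.mul_sum]

lemma traceRe_rankOne (z : (k : Fin m) → Fin (n k) → ℂ) :
    traceRe (rankOne z) = ∏ k, ∑ j, ‖z k j‖ ^ 2 := by
  simp only [traceRe, LinearMap.coe_mk, AddHom.coe_mk, rankOne, Complex.mul_conj']
  rw [← Fintype.prod_sum (fun k j => (‖z k j‖ : ℂ) ^ 2)]
  norm_cast

def unitVectors (m : ℕ) (n : Fin m → ℕ) : Set ((k : Fin m) → Fin (n k) → ℂ) :=
  Set.univ.pi fun k => {v : Fin (n k) → ℂ | ∑ j, ‖v j‖ ^ 2 = 1}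

lemma isCompact_unitVectors : IsCompact (unitVectors m n) := by
  refine isCompact_univ_pi fun _ => Metric.isCompact_of_isClosed_isBounded
    (isClosed_eq (by fun_prop) continuous_const)
    ((Metric.isBounded_closedBall (x := 0) (r := 1)).subset fun v hv => ?_)
  rw [mem_closedBall_zero_iff, pi_norm_le_iff_of_nonneg zero_le_one]
  intro j
  have : ‖v j‖ ^ 2 ≤ 1 :=
    hv ▸ Finset.single_le_sum (fun j _ => sq_nonneg ‖v j‖) (Finset.mem_univ j)
  nlinarith [norm_nonneg (v j)]

lemma exists_eq_pos_smul_of_ne_zero {d : ℕ} {v : Fin d → ℂ} (hv : v ≠ 0) :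
    ∃ N : ℝ, 0 < N ∧ ∃ w : Fin d → ℂ, ∑ j, ‖w j‖ ^ 2 = 1 ∧
      v = (N : ℂ) • w := by
  have hS : 0 < ∑ j, ‖v j‖ ^ 2 := by
    obtain ⟨j, hj⟩ := Function.ne_iff.1 hv
    exact Finset.sum_pos' (fun _ _ => by positivity)
      ⟨j, Finset.mem_univ _, pow_pos (norm_pos_iff.2 hj) 2⟩
  set N := Real.sqrt (∑ j, ‖v j‖ ^ 2)
  have hN : 0 < N := Real.sqrt_pos.2 hS
  refine ⟨N, hN, (N⁻¹ : ℂ) • v, ?_, ?_⟩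
  · simp only [Pi.smul_apply, smul_eq_mul, norm_mul, mul_pow, ← Finset.mul_sum, norm_inv,
      Complex.norm_real, Real.norm_eq_abs, abs_of_pos hN, inv_pow]
    rw [Real.sq_sqrt hS.le]
    exact inv_mul_cancel₀ hS.ne'
  · rw [smul_smul, mul_inv_cancel₀ (by exact_mod_cast hN.ne'), one_smul]

lemma rankOne_eq_zero_or_smul_unitVectors (z : (k : Fin m) → Fin (n k) → ℂ) :
    rankOne z = 0 ∨
      ∃ t : ℝ, 0 < t ∧ ∃ w ∈ unitVectors m n, rankOne z = t • rankOne w := by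
  by_cases hz : ∃ k, z k = 0
  · obtain ⟨k, hk⟩ := hz
    left
    funext I J
    exact Finset.prod_eq_zero (Finset.mem_univ k) (by simp [hk])
  push Not at hz
  choose N hN w hw hzw using fun k => exists_eq_pos_smul_of_ne_zero (hz k)
  right
  refine ⟨∏ k, ‖(N k : ℂ)‖ ^ 2, ?_, w, fun k _ => hw k, ?_⟩
  · exact Finset.prod_pos fun k _ => by simpa using pow_pos (hN k) 2
  · rw [← rankOne_smul]
    exact congrArg rankOne (funext hzw)

lemma isSep_iff_mem_insert_zero_hull [NeZero m] {B : Tensor m n} : IsSep B ↔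
    B ∈ insert 0 (ConvexCone.hull ℝ (convexHull ℝ (rankOne '' unitVectors m n)) : Set _) := by
  set C := ConvexCone.hull ℝ (convexHull ℝ (rankOne '' unitVectors m n))
  constructor
  · intro hB
    obtain ⟨r, u, rfl⟩ := isSep_iff.1 hB
    refine Finset.sum_induction _ (· ∈ (insert 0 C : Set (Tensor m n))) ?_ (Set.mem_insert 0 _)
      fun i _ => ?_
    · rintro a b (rfl | ha) (rfl | hb)
      · simp
      · simpa using Or.inr hb
      · simpa using Or.inr ha
      · exact Set.mem_insert_of_mem 0 (C.add_mem ha hb)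
    · rcases rankOne_eq_zero_or_smul_unitVectors (u i) with h | ⟨t, ht, w, hw, h⟩
      · exact h ▸ Set.mem_insert (0 : Tensor m n) C
      · exact Set.mem_insert_of_mem 0 (h ▸ C.smul_mem ht
          (ConvexCone.subset_hull (subset_convexHull ℝ _ ⟨w, hw, rfl⟩)))
  · rintro (rfl | hB)
    · exact isSep_zero
    · obtain ⟨t, ht, c, hc, rfl⟩ :=
        (ConvexCone.mem_hull_of_convex (convex_convexHull ℝ _)).1 hB
      have hsub : rankOne '' unitVectors m n ⊆ {B | IsSep B} := by
        rintro _ ⟨z, -, rfl⟩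
        exact isSep_rankOne z
      exact (convexHull_min hsub convex_setOf_isSep hc).smul ht.le

lemma isClosed_setOf_isSep [NeZero m] : IsClosed {B : Tensor m n | IsSep B} := by
  have hS : IsCompact (rankOne '' unitVectors m n) :=
    isCompact_unitVectors.image (by unfold rankOne; fun_prop)
  have htrace : ∀ c ∈ convexHull ℝ (rankOne '' unitVectors m n),
      LinearMap.toContinuousLinearMap traceRe c = 1 := by
    refine convexHull_min ?_ (convex_hyperplane traceRe.isLinear 1)
    rintro _ ⟨z, hz, rfl⟩
    exact (traceRe_rankOne z).trans (Finset.prod_eq_one fun k _ => hz k trivial)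
  simp_rw [isSep_iff_mem_insert_zero_hull, Set.ofPred_mem_eq]
  exact (convex_convexHull ℝ _).isClosed_insert_zero_hull (isCompact_convexHull hS) _ htrace

noncomputable def sepCone [NeZero m] : ProperCone ℝ (Tensor m n) where
  carrier := {B | IsSep B}
  add_mem' := IsSep.add
  zero_mem' := isSep_zero
  smul_mem' c _ hB := hB.smul c.2
  isClosed' := isClosed_setOf_isSep

theorem separable_psd_duality_general
    (m : ℕ) (hm : 1 ≤ m) (n : Fin m → ℕ) :
    (∀ A : ((k : Fin m) → Fin (n k)) → ((k : Fin m) → Fin (n k)) → ℂ, IsHerm A →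
      ((∀ B, IsHerm B → IsSep B → 0 ≤ (ip A B).re) ↔ IsPsd A))
    ∧
    (∀ B : ((k : Fin m) → Fin (n k)) → ((k : Fin m) → Fin (n k)) → ℂ, IsHerm B →
      ((∀ A, IsHerm A → IsPsd A → 0 ≤ (ip A B).re) ↔ IsSep B)) := by
  have : NeZero m := ⟨by omega⟩
  refine ⟨fun A _ => ⟨fun h z => h _ (isHerm_rankOne z) (isSep_rankOne z),
    fun hA _ _ hB => hA.re_ip_nonneg hB⟩,
    fun B hB => ⟨fun h => ?_, fun hB _ _ hA => hA.re_ip_nonneg hB⟩⟩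
  by_contra hBsep
  obtain ⟨f, hf, hfB⟩ := (sepCone (n := n)).hyperplane_separation_point hBsep
  obtain ⟨A, hA⟩ := exists_re_ip_eq (f : Tensor m n →ₗ[ℝ] ℝ)
  have hpsd : IsPsd (hermPart A) := fun z => by
    rw [re_ip_hermPart A (isHerm_rankOne z), hA]
    exact hf _ (isSep_rankOne z)
  have hAB := h _ (isHerm_hermPart A) hpsd
  rw [re_ip_hermPart A hB, hA] at hAB
  exact hAB.not_gt hfB

/-- The separable cone and the psd cone of Hermitian tensors are dual to each other. -/
theorem separable_psd_duality
    (m : ℕ) (hm : 1 ≤ m) (n : Fin m → ℕ) (hn : ∀ k, 1 ≤ n k) :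
    (∀ A : ((k : Fin m) → Fin (n k)) → ((k : Fin m) → Fin (n k)) → ℂ, IsHerm A →
      ((∀ B, IsHerm B → IsSep B → 0 ≤ (ip A B).re) ↔ IsPsd A))
    ∧
    (∀ B : ((k : Fin m) → Fin (n k)) → ((k : Fin m) → Fin (n k)) → ℂ, IsHerm B →
      ((∀ A, IsHerm A → IsPsd A → 0 ≤ (ip A B).re) ↔ IsSep B)) :=
  separable_psd_duality_general m hm n

end HermitianTensorDuality
end

section
/- A Hermitian tensor H of format (n_1,…,n_m) is separable if and only if there exists a finite Borel measure μ on ℂ^{n_1} × ⋯ × ℂ^{n_m} whose support is contained in the multi-sphere {(z_1,…,z_m) : ‖z_1‖ = ⋯ = ‖z_m‖ = 1} and such that H_{IJ} = ∫ ∏_{k=1}^m (z_k)_{i_k} · conj((z_k)_{j_k}) dμ(z_1,…,z_m) for all multi-indices I = (i_1,…,i_m) and J = (j_1,…,j_m). -/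
open MeasureTheory

noncomputable instance {ι : Type*} : MeasurableSpace (EuclideanSpace ℂ ι) :=
  MeasurableSpace.comap WithLp.ofLp MeasurableSpace.pi

noncomputable instance {ι : Type*} [Fintype ι] : BorelSpace (EuclideanSpace ℂ ι) :=
  PiLp.borelSpace 2

/-!
Both sides describe the same convex cone of tensors. Normalising each factor of
`[u_1, …, u_m]_⊗h` and moving the scale into a single factor shows that the separable tensors
form the cone generated by the `[z_1, …, z_m]_⊗h` with `z` on the multi-sphere; such a tensor is
the moment tensor of a Dirac mass, and moment tensors add and scale with their measures.
Conversely, the moment tensor of a nonzero finite measure `μ` is `μ(univ)` times the average of the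
continuous map `z ↦ [z_1, …, z_m]_⊗h` over the compact multi-sphere. That average lies in the
convex hull of the compact image, which is closed because, by Carathéodory, convex hulls of compact
sets are compact in finite dimensions.
-/

section ConvexHull

open Function in
/-- Carathéodory: pad the at most `finrank + 1` points of a convex combination with
weight-zero copies of `x₀`. -/
theorem convexHull_subset_image_stdSimplex {𝕜 E : Type*} [Field 𝕜] [LinearOrder 𝕜]
    [IsStrictOrderedRing 𝕜] [AddCommGroup E] [Module 𝕜 E] [FiniteDimensional 𝕜 E]
    {s : Set E} {x₀ : E} (hx₀ : x₀ ∈ s) :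
    convexHull 𝕜 s ⊆ (fun p : (Fin (Module.finrank 𝕜 E + 1) → 𝕜) × (Fin _ → E) =>
      ∑ i, p.1 i • p.2 i) '' (stdSimplex 𝕜 _ ×ˢ Set.univ.pi fun _ => s) := by
  intro x hx
  obtain ⟨ι, _, z, w, hzs, hz, hw, hw1, rfl⟩ := eq_pos_convex_span_of_mem_convexHull hx
  obtain ⟨e⟩ : Nonempty (ι ↪ Fin (Module.finrank 𝕜 E + 1)) :=
    Embedding.nonempty_of_card_le <| by
      simpa using hz.card_le_finrank_succ.trans (Nat.succ_le_succ (Submodule.finrank_le _))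
  have hw' (j) (hj : j ∉ Set.range e) : extend e w 0 j = 0 := extend_apply' _ _ _ hj
  refine ⟨(extend e w 0, extend e z fun _ => x₀), ⟨⟨fun j => ?_, ?_⟩, fun j _ => ?_⟩, ?_⟩
  · by_cases hj : j ∈ Set.range e
    · obtain ⟨i, rfl⟩ := hj
      simpa [e.injective.extend_apply] using (hw i).le
    · simp [hw' j hj]
  · rw [← hw1]
    exact (Fintype.sum_of_injective e e.injective _ _ hw'
      fun i => (e.injective.extend_apply ..).symm).symm
  · by_cases hj : j ∈ Set.range e
    · obtain ⟨i, rfl⟩ := hj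
      simpa [e.injective.extend_apply] using hzs (Set.mem_range_self i)
    · simpa [extend_apply' _ _ _ hj] using hx₀
  · refine (Fintype.sum_of_injective e e.injective _ _ (fun j hj => by simp [hw' j hj])
      fun i => ?_).symm
    simp [e.injective.extend_apply]

theorem IsCompact.isCompact_convexHull {E : Type*} [NormedAddCommGroup E] [NormedSpace ℝ E]
    [FiniteDimensional ℝ E] {K : Set E} (hK : IsCompact K) : IsCompact (convexHull ℝ K) := by
  obtain rfl | ⟨x₀, hx₀⟩ := K.eq_empty_or_nonempty
  · simp
  have hsub : (fun p : (Fin (Module.finrank ℝ E + 1) → ℝ) × (Fin _ → E) => ∑ i, p.1 i • p.2 i) ''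
      (stdSimplex ℝ _ ×ˢ Set.univ.pi fun _ => K) ⊆ convexHull ℝ K := by
    rintro _ ⟨⟨w, z⟩, ⟨hw, hz⟩, rfl⟩
    exact (convex_convexHull ℝ K).sum_mem (fun i _ => hw.1 i) hw.2
      fun i _ => subset_convexHull ℝ K (hz i trivial)
  rw [(convexHull_subset_image_stdSimplex hx₀).antisymm hsub]
  exact ((isCompact_stdSimplex ℝ _).prod (isCompact_univ_pi fun _ => hK)).image (by fun_prop)

end ConvexHull

open scoped ComplexConjugate

section SeparableCone

variable {ι : Type*} {d : ι → Type*}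

variable (d) in
abbrev Tensor := ((k : ι) → d k) → ((k : ι) → d k) → ℂ

variable [Fintype ι]

def hermTensor (u : (k : ι) → d k → ℂ) : Tensor d :=
  fun I J => ∏ k, u k (I k) * conj (u k (J k))

theorem hermTensor_smul (c : ι → ℂ) (u : (k : ι) → d k → ℂ) :
    hermTensor (fun k => c k • u k) = (∏ k, Complex.normSq (c k)) • hermTensor u := by
  ext I J
  simp only [hermTensor, Pi.smul_apply, smul_eq_mul, Complex.real_smul, Complex.ofReal_prod,
    ← Finset.prod_mul_distrib, map_mul, Complex.normSq_eq_conj_mul_self]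
  exact Finset.prod_congr rfl fun k _ => by ring

theorem exists_hermTensor_eq_smul [Nonempty ι] {c : ℝ} (hc : 0 ≤ c) (u : (k : ι) → d k → ℂ) :
    ∃ v, hermTensor v = c • hermTensor u := by
  classical
  let k₀ := Classical.arbitrary ι
  refine ⟨fun k => Function.update (1 : ι → ℂ) k₀ (Real.sqrt c : ℂ) k • u k, ?_⟩
  rw [hermTensor_smul]
  congr 1
  rw [Finset.prod_eq_single k₀ (fun k _ hk => by simp [hk]) (by simp)]
  simp [Complex.normSq_ofReal, Real.mul_self_sqrt hc]

theorem continuous_hermTensor :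
    Continuous fun z : (k : ι) → EuclideanSpace ℂ (d k) => hermTensor fun k => ⇑(z k) := by
  unfold hermTensor
  fun_prop

variable (d) in
noncomputable def separableCone : PointedCone ℝ (Tensor d) :=
  PointedCone.hull ℝ (Set.range hermTensor)

theorem mem_separableCone_iff [Nonempty ι] {H : Tensor d} :
    H ∈ separableCone d ↔
      ∃ (r : ℕ) (u : Fin r → (k : ι) → d k → ℂ), ∀ I J, H I J = ∑ i, hermTensor (u i) I J := by
  simp only [← Finset.sum_apply, ← funext_iff]
  constructor
  · intro hH
    obtain ⟨r, c, g, rfl⟩ := Submodule.mem_span_set'.mp hH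
    choose u hu using fun i => (g i).2
    choose v hv using fun i => exists_hermTensor_eq_smul (c i).2 (u i)
    exact ⟨r, v, by simp only [hv, hu]; rfl⟩
  · rintro ⟨r, u, rfl⟩
    exact Submodule.sum_mem _ fun i _ => PointedCone.subset_hull (Set.mem_range_self (u i))

end SeparableCone

section MomentCone

variable {ι : Type*} {d : ι → Type*} [∀ k, Fintype (d k)]

variable (d) in
def multiSphere : Set ((k : ι) → EuclideanSpace ℂ (d k)) :=
  {z | ∀ k, ‖z k‖ = 1}

theorem isCompact_multiSphere : IsCompact (multiSphere d) := by
  simpa [multiSphere, Set.pi, mem_sphere_zero_iff_norm] using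
    isCompact_univ_pi fun k => isCompact_sphere (0 : EuclideanSpace ℂ (d k)) 1

variable [Fintype ι] [DecidableEq ι]

theorem integrable_hermTensor {μ : Measure ((k : ι) → EuclideanSpace ℂ (d k))}
    [IsFiniteMeasure μ] (hμ : μ (multiSphere d)ᶜ = 0) :
    Integrable (fun z : (k : ι) → EuclideanSpace ℂ (d k) => hermTensor fun k => ⇑(z k)) μ := by
  obtain ⟨C, hC⟩ := (isCompact_multiSphere (d := d)).exists_bound_of_continuousOn
    continuous_hermTensor.continuousOn
  refine .of_bound continuous_hermTensor.aestronglyMeasurable C ?_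
  filter_upwards [ae_iff.mpr hμ] with z hz using hC z hz

theorem integral_hermTensor_apply {μ : Measure ((k : ι) → EuclideanSpace ℂ (d k))}
    [IsFiniteMeasure μ] (hμ : μ (multiSphere d)ᶜ = 0) (I J : (k : ι) → d k) :
    (∫ z, hermTensor (fun k => ⇑(z k)) ∂μ) I J = ∫ z, hermTensor (fun k => ⇑(z k)) I J ∂μ := by
  have hF := integrable_hermTensor hμ
  rw [eval_integral hF.eval, eval_integral (hF.eval I).eval]

variable (d) in
noncomputable def momentCone : PointedCone ℝ (Tensor d) where
  carrier := {H | ∃ μ : Measure ((k : ι) → EuclideanSpace ℂ (d k)), IsFiniteMeasure μ ∧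
    μ (multiSphere d)ᶜ = 0 ∧ H = ∫ z, hermTensor (fun k => ⇑(z k)) ∂μ}
  add_mem' := by
    rintro _ _ ⟨μ, hμ, hμS, rfl⟩ ⟨ν, hν, hνS, rfl⟩
    exact ⟨μ + ν, inferInstance, by simp [hμS, hνS],
      (integral_add_measure (integrable_hermTensor hμS) (integrable_hermTensor hνS)).symm⟩
  zero_mem' := ⟨0, inferInstance, rfl, by simp⟩
  smul_mem' := by
    rintro c _ ⟨μ, hμ, hμS, rfl⟩
    refine ⟨c.1.toNNReal • μ, inferInstance, by simp [hμS], ?_⟩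
    rw [integral_smul_nnreal_measure, NNReal.smul_def, Real.coe_toNNReal _ c.2]
    rfl

theorem mem_momentCone_iff {H : Tensor d} :
    H ∈ momentCone d ↔ ∃ μ : Measure ((k : ι) → EuclideanSpace ℂ (d k)), IsFiniteMeasure μ ∧
      μ (multiSphere d)ᶜ = 0 ∧ ∀ I J, H I J = ∫ z, hermTensor (fun k => ⇑(z k)) I J ∂μ := by
  refine exists_congr fun μ => and_congr_right fun hμ => and_congr_right fun hμS => ?_
  simp only [funext_iff, integral_hermTensor_apply hμS]

theorem hermTensor_mem_momentCone_of_mem_multiSphere {z : (k : ι) → EuclideanSpace ℂ (d k)}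
    (hz : z ∈ multiSphere d) : hermTensor (fun k => ⇑(z k)) ∈ momentCone d := by
  refine ⟨Measure.dirac z, inferInstance, ?_,
    (integral_dirac' _ z continuous_hermTensor.stronglyMeasurable).symm⟩
  rw [Measure.dirac_apply' _ isCompact_multiSphere.isClosed.measurableSet.compl]
  simp [hz]

theorem hermTensor_mem_momentCone (u : (k : ι) → d k → ℂ) : hermTensor u ∈ momentCone d := by
  by_cases hu : ∃ k, u k = 0
  · obtain ⟨k, hk⟩ := hu
    have : hermTensor u = 0 := by
      funext I J
      exact Finset.prod_eq_zero (Finset.mem_univ k) (by simp [hk])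
    rw [this]
    exact zero_mem _
  push Not at hu
  let v k : EuclideanSpace ℂ (d k) := WithLp.toLp 2 (u k)
  have hv k : v k ≠ 0 := by simpa [v] using hu k
  let z k := (‖v k‖⁻¹ : ℂ) • v k
  have hz : z ∈ multiSphere d := fun k => norm_smul_inv_norm (hv k)
  have huz : u = fun k => (‖v k‖ : ℂ) • ⇑(z k) := by
    funext k
    simp [z, v, smul_smul,
      mul_inv_cancel₀ (Complex.ofReal_ne_zero.mpr (norm_ne_zero_iff.mpr (hv k)))]
  rw [huz, hermTensor_smul]
  exact (momentCone d).smul_mem (Finset.prod_nonneg fun k _ => Complex.normSq_nonneg _)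
    (hermTensor_mem_momentCone_of_mem_multiSphere hz)

theorem separableCone_le_momentCone : separableCone d ≤ momentCone d :=
  Submodule.span_le.mpr (Set.range_subset_iff.mpr hermTensor_mem_momentCone)

theorem momentCone_le_separableCone : momentCone d ≤ separableCone d := by
  rintro _ ⟨μ, hμ, hμS, rfl⟩
  rcases eq_zero_or_neZero μ with rfl | hμ0
  · simp only [integral_zero_measure]
    exact zero_mem _
  set F := fun z : (k : ι) → EuclideanSpace ℂ (d k) => hermTensor fun k => ⇑(z k)
  have hK : IsCompact (F '' multiSphere d) := isCompact_multiSphere.image continuous_hermTensor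
  have havg : ⨍ z, F z ∂μ ∈ convexHull ℝ (F '' multiSphere d) :=
    (convex_convexHull ℝ _).average_mem hK.isCompact_convexHull.isClosed
      (by filter_upwards [ae_iff.mpr hμS] with z hz using subset_convexHull ℝ _ ⟨z, hz, rfl⟩)
      (integrable_hermTensor hμS)
  have hhull : convexHull ℝ (F '' multiSphere d) ⊆ separableCone d :=
    convexHull_min (Set.image_subset_iff.mpr fun z _ => PointedCone.subset_hull ⟨_, rfl⟩)
      (separableCone d).convex
  rw [← measure_smul_average]
  exact (separableCone d).smul_mem measureReal_nonneg (hhull havg)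

theorem separableCone_eq_momentCone : separableCone d = momentCone d :=
  separableCone_le_momentCone.antisymm momentCone_le_separableCone

end MomentCone

theorem separable_iff_representing_measure_general
    (m : ℕ) (hm : 1 ≤ m) (n : Fin m → ℕ)
    (H : ((k : Fin m) → Fin (n k)) → ((k : Fin m) → Fin (n k)) → ℂ) :
    (∃ (r : ℕ) (u : (i : Fin r) → (k : Fin m) → Fin (n k) → ℂ),
        ∀ I J, H I J = ∑ i, ∏ k, u i k (I k) * (starRingEnd ℂ) (u i k (J k)))
      ↔
    (∃ μ : Measure ((k : Fin m) → EuclideanSpace ℂ (Fin (n k))),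
        IsFiniteMeasure μ ∧
        μ {z | ∀ k, ‖z k‖ = 1}ᶜ = 0 ∧
        ∀ I J, H I J =
          ∫ z, (∏ k, (z k) (I k) * (starRingEnd ℂ) ((z k) (J k))) ∂μ) := by
  have : Nonempty (Fin m) := ⟨⟨0, hm⟩⟩
  refine (mem_separableCone_iff (H := H)).symm.trans ?_
  rw [separableCone_eq_momentCone]
  exact mem_momentCone_iff

/-- A Hermitian tensor is separable iff it is the "moment tensor" of a finite Borel
measure supported in the multi-sphere. -/
theorem separable_iff_representing_measure
    (m : ℕ) (hm : 1 ≤ m) (n : Fin m → ℕ) (hn : ∀ k, 1 ≤ n k)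
    (H : ((k : Fin m) → Fin (n k)) → ((k : Fin m) → Fin (n k)) → ℂ)
    (hH : ∀ I J, H I J = (starRingEnd ℂ) (H J I)) :
    (∃ (r : ℕ) (u : (i : Fin r) → (k : Fin m) → Fin (n k) → ℂ),
        ∀ I J, H I J = ∑ i, ∏ k, u i k (I k) * (starRingEnd ℂ) (u i k (J k)))
      ↔
    (∃ μ : Measure ((k : Fin m) → EuclideanSpace ℂ (Fin (n k))),
        IsFiniteMeasure μ ∧
        μ {z | ∀ k, ‖z k‖ = 1}ᶜ = 0 ∧
        ∀ I J, H I J =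
          ∫ z, (∏ k, (z k) (I k) * (starRingEnd ℂ) ((z k) (J k))) ∂μ) :=
  separable_iff_representing_measure_general m hm n H
end

section
/- If a Hermitian tensor H of format (n_1,…,n_m) is not separable, then there exists a positive definite Hermitian tensor A of the same format (i.e., Re⟨A, [z_1,…,z_m]_⊗h⟩ > 0 whenever all z_k ∈ ℂ^{n_k} are nonzero) such that Re⟨A, H⟩ < 0. -/
namespace HermitianTensorSeparatingHyperplane

variable {m : ℕ} {n : Fin m → ℕ}

/-- A complex array indexed by pairs of multi-indices is Hermitian. -/
def IsHerm (H : ((k : Fin m) → Fin (n k)) → ((k : Fin m) → Fin (n k)) → ℂ) : Prop :=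
  ∀ I J, H I J = (starRingEnd ℂ) (H J I)

/-- The rank-1 Hermitian tensor `[z_1, …, z_m]_⊗h`. -/
def rankOne (z : (k : Fin m) → Fin (n k) → ℂ) :
    ((k : Fin m) → Fin (n k)) → ((k : Fin m) → Fin (n k)) → ℂ :=
  fun I J => ∏ k, z k (I k) * (starRingEnd ℂ) (z k (J k))

/-- The inner product `⟨A,B⟩ = ∑_{I,J} A_{IJ} conj(B_{IJ})`. -/
noncomputable def ip (A B : ((k : Fin m) → Fin (n k)) → ((k : Fin m) → Fin (n k)) → ℂ) : ℂ :=
  ∑ I, ∑ J, A I J * (starRingEnd ℂ) (B I J)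

/-!
The separable tensors form a convex cone. It is closed: normalising every factor `z_k` to unit
length exhibits it as the cone over the convex hull of a compact set of rank-one tensors of trace
`1`, and that hull is compact by Carathéodory's theorem. Farkas' lemma therefore separates `H` from
the cone by a real-linear functional, which is `Re⟨A₀, ·⟩` for some `A₀`: nonnegative on separable
tensors, negative at `H`. Passing to the Hermitian part of `A₀` does not change these values on
Hermitian tensors, and adding a small multiple `ε` of the identity, whose pairing with
`[z_1, …, z_m]_⊗h` is `∏ ‖z_k‖²`, makes the inequality strict on rank-one tensors with nonzero
factors while keeping `Re⟨A, H⟩ < 0`.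
-/

section ConvexGeometry

open Pointwise

variable {E : Type*} [AddCommGroup E] [Module ℝ E]

theorem convexHull_eq_biUnion_image_stdSimplex [FiniteDimensional ℝ E] (s : Set E) :
    convexHull ℝ s = ⋃ k ∈ Finset.range (Module.finrank ℝ E + 2),
      (fun p : (Fin k → ℝ) × (Fin k → E) => ∑ i, p.1 i • p.2 i) ''
        (stdSimplex ℝ (Fin k) ×ˢ Set.univ.pi fun _ => s) := by
  apply subset_antisymm
  · intro x hx
    obtain ⟨ι, _, z, w, hzs, hz, hw, hw₁, rfl⟩ := eq_pos_convex_span_of_mem_convexHull hx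
    have hcard : Fintype.card ι < Module.finrank ℝ E + 2 :=
      Nat.lt_succ_of_le <| hz.card_le_finrank_succ.trans <| by
        simpa using Submodule.finrank_le (vectorSpan ℝ (Set.range z))
    let e := Fintype.equivFin ι
    refine Set.mem_biUnion (Finset.mem_range.2 hcard)
      ⟨(w ∘ e.symm, z ∘ e.symm), ⟨⟨fun i => (hw _).le, ?_⟩, fun i _ => hzs ⟨_, rfl⟩⟩, ?_⟩
    · simpa [e.symm.sum_comp w] using hw₁
    · exact e.symm.sum_comp fun i => w i • z i
  · simp only [Set.iUnion_subset_iff, Set.image_subset_iff]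
    rintro k - ⟨w, b⟩ ⟨⟨hw₀, hw₁⟩, hb⟩
    exact (convex_convexHull ℝ s).sum_mem (fun i _ => hw₀ i) hw₁
      fun i _ => subset_convexHull ℝ s (hb i (Set.mem_univ i))

theorem isCompact_convexHull [TopologicalSpace E] [ContinuousAdd E] [ContinuousSMul ℝ E]
    [FiniteDimensional ℝ E] {s : Set E} (hs : IsCompact s) : IsCompact (convexHull ℝ s) := by
  rw [convexHull_eq_biUnion_image_stdSimplex]
  refine (Finset.range _).isCompact_biUnion fun k _ => ?_
  exact ((isCompact_stdSimplex ℝ (Fin k)).prod (isCompact_univ_pi fun _ => hs)).image <|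
    continuous_finsetSum _ fun i _ =>
      ((continuous_apply i).comp continuous_fst).smul ((continuous_apply i).comp continuous_snd)

theorem isClosed_Ici_smul_of_isCompact [TopologicalSpace E] [ContinuousSMul ℝ E] [T2Space E]
    {D : Set E} (hD : IsCompact D) (f : E →L[ℝ] ℝ) (hf : ∀ c ∈ D, f c = 1) :
    IsClosed (Set.Ici (0 : ℝ) • D) := by
  have hcone : Set.Ici (0 : ℝ) • D =
      {x | 0 ≤ f x} ∩ SetRel.preimage {p : E × E | p.1 = f p.1 • p.2} D := by
    ext x
    simp only [Set.mem_smul, Set.mem_Ici, Set.mem_inter_iff, Set.mem_ofPred_eq,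
      SetRel.mem_preimage]
    constructor
    · rintro ⟨t, ht, c, hc, rfl⟩
      have hft : f (t • c) = t := by simp [hf c hc]
      exact ⟨hft.symm ▸ ht, c, hc, by rw [hft]⟩
    · rintro ⟨hx, c, hc, hxc⟩
      exact ⟨f x, hx, c, hc, hxc.symm⟩
  rw [hcone]
  exact (isClosed_le continuous_const f.continuous).inter <|
    (isClosed_eq continuous_fst ((f.continuous.comp continuous_fst).smul continuous_snd))
      |>.relPreimage_of_isCompact hD

theorem sum_smul_mem_Ici_smul_convexHull {ι : Type*} {s : Finset ι} {D : Set E}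
    (hD : D.Nonempty) {τ : ι → ℝ} {c : ι → E} (hτ : ∀ i ∈ s, 0 ≤ τ i) (hc : ∀ i ∈ s, c i ∈ D) :
    ∑ i ∈ s, τ i • c i ∈ Set.Ici (0 : ℝ) • convexHull ℝ D := by
  rcases (Finset.sum_nonneg hτ).eq_or_lt with hsum | hsum
  · obtain ⟨d, hd⟩ := hD
    refine ⟨0, Set.mem_Ici.2 le_rfl, d, subset_convexHull ℝ D hd, ?_⟩
    change (0 : ℝ) • d = _
    rw [zero_smul, eq_comm]
    refine Finset.sum_eq_zero fun i hi => ?_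
    rw [(Finset.sum_eq_zero_iff_of_nonneg hτ).1 hsum.symm i hi, zero_smul]
  · refine ⟨_, hsum.le, s.centerMass τ c, s.centerMass_mem_convexHull hτ hsum hc, ?_⟩
    simp only [Finset.centerMass, smul_smul, mul_inv_cancel₀ hsum.ne', one_smul]

end ConvexGeometry

open ComplexConjugate

abbrev Tensor (n : Fin m → ℕ) : Type :=
  ((k : Fin m) → Fin (n k)) → ((k : Fin m) → Fin (n k)) → ℂ

def IsSeparable (X : Tensor n) : Prop :=
  ∃ (r : ℕ) (u : Fin r → (k : Fin m) → Fin (n k) → ℂ), X = ∑ i, rankOne (u i)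

theorem isSeparable_zero : IsSeparable (0 : Tensor n) :=
  ⟨0, Fin.elim0, by simp⟩

theorem isSeparable_rankOne (z : (k : Fin m) → Fin (n k) → ℂ) : IsSeparable (rankOne z) :=
  ⟨1, fun _ => z, by simp⟩

theorem IsSeparable.add {X Y : Tensor n} (hX : IsSeparable X) (hY : IsSeparable Y) :
    IsSeparable (X + Y) := by
  obtain ⟨r, u, rfl⟩ := hX
  obtain ⟨s, v, rfl⟩ := hY
  exact ⟨r + s, Fin.append u v, by simp [Fin.sum_univ_add]⟩

theorem rankOne_smul (c : Fin m → ℂ) (z : (k : Fin m) → Fin (n k) → ℂ) :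
    rankOne (fun k => c k • z k) = (∏ k, Complex.normSq (c k)) • rankOne z := by
  ext I J
  simp only [rankOne, Pi.smul_apply, smul_eq_mul, Complex.real_smul, Complex.ofReal_prod,
    map_mul, ← Finset.prod_mul_distrib, Complex.normSq_eq_conj_mul_self]
  exact Finset.prod_congr rfl fun k _ => by ring

theorem IsSeparable.smul (hm : 1 ≤ m) {X : Tensor n} (hX : IsSeparable X) {t : ℝ} (ht : 0 ≤ t) :
    IsSeparable (t • X) := by
  obtain ⟨r, u, rfl⟩ := hX
  let c : Fin m → ℂ := fun k => if k = ⟨0, hm⟩ then (Real.sqrt t : ℂ) else 1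
  have hc : ∏ k, Complex.normSq (c k) = t := by
    simp only [c, apply_ite Complex.normSq, Complex.normSq_one, Finset.prod_ite_eq',
      Finset.mem_univ, if_true, Complex.normSq_ofReal, Real.mul_self_sqrt ht]
  exact ⟨r, fun i k => c k • u i k, by simp only [Finset.smul_sum, rankOne_smul, hc]⟩

theorem convex_setOf_isSeparable (hm : 1 ≤ m) : Convex ℝ {X : Tensor n | IsSeparable X} :=
  fun _ hX _ hY _ _ ha hb _ => (hX.smul hm ha).add (hY.smul hm hb)

theorem continuous_rankOne :
    Continuous (rankOne : ((k : Fin m) → Fin (n k) → ℂ) → Tensor n) := by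
  unfold rankOne
  fun_prop

def unitFactors : Set ((k : Fin m) → Fin (n k) → ℂ) :=
  {z | ∀ k, ∑ i, Complex.normSq (z k i) = 1}

theorem isCompact_unitFactors : IsCompact (unitFactors (n := n)) := by
  refine (isCompact_closedBall 0 1).of_isClosed_subset ?_ fun z hz => ?_
  · simp only [unitFactors, Set.ofPred_forall]
    exact isClosed_iInter fun k => isClosed_eq (by fun_prop) continuous_const
  · rw [mem_closedBall_zero_iff, pi_norm_le_iff_of_nonneg zero_le_one]
    refine fun k => (pi_norm_le_iff_of_nonneg zero_le_one).2 fun i => ?_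
    have hle : Complex.normSq (z k i) ≤ 1 :=
      hz k ▸ Finset.single_le_sum (fun j _ => Complex.normSq_nonneg _) (Finset.mem_univ i)
    rw [Complex.normSq_eq_norm_sq] at hle
    exact (sq_le_one_iff₀ (norm_nonneg _)).1 hle

theorem unitFactors_nonempty (hn : ∀ k, 1 ≤ n k) : (unitFactors (n := n)).Nonempty :=
  ⟨fun k => Pi.single ⟨0, hn k⟩ 1, fun k => by simp [apply_ite Complex.normSq, Pi.single_apply]⟩

noncomputable def traceRe : Tensor n →L[ℝ] ℝ :=
  ∑ I, Complex.reCLM.comp ((ContinuousLinearMap.proj (R := ℝ) (φ := fun _ => ℂ) I).comp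
    (ContinuousLinearMap.proj (R := ℝ) (φ := fun _ => ((k : Fin m) → Fin (n k)) → ℂ) I))

theorem traceRe_apply (X : Tensor n) : traceRe X = ∑ I, (X I I).re := by
  simp [traceRe]

theorem traceRe_rankOne (z : (k : Fin m) → Fin (n k) → ℂ) :
    traceRe (rankOne z) = ∏ k, ∑ i, Complex.normSq (z k i) := by
  simp only [traceRe_apply, rankOne, Complex.mul_conj, ← Complex.ofReal_prod, Complex.ofReal_re]
  rw [Finset.prod_univ_sum, Fintype.piFinset_univ]

theorem sum_normSq_pos {ι : Type*} [Fintype ι] {v : ι → ℂ} (hv : v ≠ 0) :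
    0 < ∑ i, Complex.normSq (v i) :=
  have ⟨i, hi⟩ := Function.ne_iff.1 hv
  Finset.sum_pos' (fun _ _ => Complex.normSq_nonneg _)
    ⟨i, Finset.mem_univ i, Complex.normSq_pos.2 hi⟩

theorem traceRe_rankOne_nonneg (z : (k : Fin m) → Fin (n k) → ℂ) : 0 ≤ traceRe (rankOne z) := by
  rw [traceRe_rankOne]
  exact Finset.prod_nonneg fun k _ => Finset.sum_nonneg fun i _ => Complex.normSq_nonneg _

theorem traceRe_rankOne_pos {z : (k : Fin m) → Fin (n k) → ℂ} (hz : ∀ k, z k ≠ 0) :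
    0 < traceRe (rankOne z) := by
  rw [traceRe_rankOne]
  exact Finset.prod_pos fun k _ => sum_normSq_pos (hz k)

theorem exists_rankOne_eq_traceRe_smul (hn : ∀ k, 1 ≤ n k) (z : (k : Fin m) → Fin (n k) → ℂ) :
    ∃ c ∈ rankOne '' unitFactors, rankOne z = traceRe (rankOne z) • c := by
  rw [traceRe_rankOne]
  set s : Fin m → ℝ := fun k => ∑ i, Complex.normSq (z k i)
  by_cases hz : ∀ k, z k ≠ 0
  · have hs : ∀ k, 0 < s k := fun k => sum_normSq_pos (hz k)
    have hnorm : ∀ k, Complex.normSq (((Real.sqrt (s k))⁻¹ : ℝ) : ℂ) * s k = 1 := fun k => by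
      rw [Complex.normSq_ofReal, ← mul_inv, Real.mul_self_sqrt (hs k).le,
        inv_mul_cancel₀ (hs k).ne']
    refine ⟨_, ⟨fun k => (((Real.sqrt (s k))⁻¹ : ℝ) : ℂ) • z k, fun k => ?_, rfl⟩, ?_⟩
    · simpa [Complex.normSq_mul, ← Finset.mul_sum] using hnorm k
    · rw [rankOne_smul, smul_smul, ← Finset.prod_mul_distrib, Finset.prod_eq_one fun k _ => ?_,
        one_smul]
      exact (mul_comm _ _).trans (hnorm k)
  · push Not at hz
    obtain ⟨k, hk⟩ := hz
    obtain ⟨w, hw⟩ := unitFactors_nonempty hn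
    refine ⟨rankOne w, ⟨w, hw, rfl⟩, ?_⟩
    rw [Finset.prod_eq_zero (Finset.mem_univ k) (by simp [hk]), zero_smul]
    ext I J
    exact Finset.prod_eq_zero (Finset.mem_univ k) (by simp [hk])

open Pointwise in
theorem setOf_isSeparable_eq (hm : 1 ≤ m) (hn : ∀ k, 1 ≤ n k) :
    {X : Tensor n | IsSeparable X} = Set.Ici (0 : ℝ) • convexHull ℝ (rankOne '' unitFactors) := by
  apply subset_antisymm
  · rintro _ ⟨r, u, rfl⟩
    choose c hc hu using fun i => exists_rankOne_eq_traceRe_smul hn (u i)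
    rw [Finset.sum_congr rfl fun i _ => hu i]
    exact sum_smul_mem_Ici_smul_convexHull (τ := fun i => traceRe (rankOne (u i)))
      ((unitFactors_nonempty hn).image _) (fun i _ => traceRe_rankOne_nonneg (u i))
      fun i _ => hc i
  · rintro _ ⟨t, ht, c, hc, rfl⟩
    have hsub : rankOne '' unitFactors ⊆ {X : Tensor n | IsSeparable X} := by
      rintro _ ⟨z, -, rfl⟩
      exact isSeparable_rankOne z
    exact (convexHull_min hsub (convex_setOf_isSeparable hm) hc).smul hm ht

def separableCone (hm : 1 ≤ m) (hn : ∀ k, 1 ≤ n k) : ProperCone ℝ (Tensor n) where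
  carrier := {X | IsSeparable X}
  add_mem' := IsSeparable.add
  zero_mem' := isSeparable_zero
  smul_mem' c _ hX := hX.smul hm c.2
  isClosed' := by
    rw [setOf_isSeparable_eq hm hn]
    refine isClosed_Ici_smul_of_isCompact
      (isCompact_convexHull (isCompact_unitFactors.image continuous_rankOne)) traceRe
      fun c hc => convexHull_min ?_ ((convex_singleton 1).linear_preimage traceRe.toLinearMap) hc
    rintro _ ⟨z, hz, rfl⟩
    simp [traceRe_rankOne, hz _]

theorem mem_separableCone {hm : 1 ≤ m} {hn : ∀ k, 1 ≤ n k} {X : Tensor n} :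
    X ∈ separableCone hm hn ↔ IsSeparable X :=
  Iff.rfl

theorem exists_re_mul_conj_eq (g : ℂ →ₗ[ℝ] ℝ) : ∃ a : ℂ, ∀ c, (a * conj c).re = g c := by
  refine ⟨g 1 + g Complex.I * Complex.I, fun c => ?_⟩
  have hc : c = c.re • (1 : ℂ) + c.im • Complex.I := by simp
  conv_rhs => rw [hc, map_add, map_smul, map_smul]
  simp only [Complex.mul_re, Complex.add_re, Complex.add_im, Complex.ofReal_re, Complex.ofReal_im,
    Complex.mul_im, Complex.I_re, Complex.I_im, Complex.conj_re, Complex.conj_im, smul_eq_mul]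
  ring

theorem exists_re_ip_eq (f : Tensor n →ₗ[ℝ] ℝ) : ∃ A : Tensor n, ∀ X, (ip A X).re = f X := by
  choose A hA using fun I J =>
    exists_re_mul_conj_eq
      (f ∘ₗ LinearMap.single ℝ _ I ∘ₗ LinearMap.single ℝ (fun _ => ℂ) J)
  refine ⟨A, fun X => ?_⟩
  have hX : X = ∑ I, ∑ J, Pi.single I (Pi.single J (X I J)) := by
    ext I J
    simp [Finset.sum_apply, Pi.single_apply, ite_apply]
  conv_rhs => rw [hX]
  simp only [ip, Complex.re_sum, hA, map_sum, LinearMap.coe_comp, Function.comp_apply,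
    LinearMap.coe_single]

theorem ip_add_left (A B X : Tensor n) : ip (A + B) X = ip A X + ip B X := by
  simp only [ip, Pi.add_apply, add_mul, Finset.sum_add_distrib]

theorem ip_smul_left (c : ℝ) (A X : Tensor n) : ip (c • A) X = c * ip A X := by
  simp only [ip, Pi.smul_apply, Complex.real_smul, Finset.mul_sum, mul_assoc]

def conjTranspose (A : Tensor n) : Tensor n := fun I J => conj (A J I)

theorem ip_conjTranspose (A : Tensor n) {X : Tensor n} (hX : IsHerm X) :
    ip (conjTranspose A) X = conj (ip A X) := by
  have hX' : ∀ I J, conj (X I J) = X J I := fun I J => (hX J I).symm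
  simp only [ip, conjTranspose, map_sum, map_mul, hX']
  exact Finset.sum_comm

theorem isHerm_rankOne (z : (k : Fin m) → Fin (n k) → ℂ) : IsHerm (rankOne z) := by
  intro I J
  simp only [rankOne, map_prod, map_mul, Complex.conj_conj, mul_comm]

theorem IsHerm.add {A B : Tensor n} (hA : IsHerm A) (hB : IsHerm B) : IsHerm (A + B) :=
  fun I J => by simp only [Pi.add_apply, map_add, ← hA I J, ← hB I J]

theorem IsHerm.smul {A : Tensor n} (hA : IsHerm A) (c : ℝ) : IsHerm (c • A) :=
  fun I J => by simp only [Pi.smul_apply, Complex.real_smul, map_mul, Complex.conj_ofReal, ← hA I J]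

noncomputable def hermPart (A : Tensor n) : Tensor n := (2⁻¹ : ℝ) • (A + conjTranspose A)

theorem isHerm_hermPart (A : Tensor n) : IsHerm (hermPart A) := by
  refine IsHerm.smul (fun I J => ?_) _
  simp only [conjTranspose, Pi.add_apply, map_add, Complex.conj_conj, add_comm]

theorem re_ip_hermPart (A : Tensor n) {X : Tensor n} (hX : IsHerm X) :
    (ip (hermPart A) X).re = (ip A X).re := by
  rw [hermPart, ip_smul_left, ip_add_left, ip_conjTranspose A hX, Complex.re_ofReal_mul,
    Complex.add_re, Complex.conj_re]
  ring

def idTensor : Tensor n := fun I J => if I = J then 1 else 0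

theorem isHerm_idTensor : IsHerm (idTensor (n := n)) := by
  intro I J
  by_cases h : I = J <;> simp [idTensor, h, eq_comm]

theorem re_ip_idTensor (X : Tensor n) : (ip idTensor X).re = traceRe X := by
  simp [ip, idTensor, traceRe_apply]

/-- If a Hermitian tensor is not separable, there is a positive definite Hermitian
tensor `A` with `Re⟨A, H⟩ < 0`. -/
theorem exists_pd_separating_tensor
    (m : ℕ) (hm : 1 ≤ m) (n : Fin m → ℕ) (hn : ∀ k, 1 ≤ n k)
    (H : ((k : Fin m) → Fin (n k)) → ((k : Fin m) → Fin (n k)) → ℂ)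
    (hH : IsHerm H)
    (hsep : ¬ ∃ (r : ℕ) (u : (i : Fin r) → (k : Fin m) → Fin (n k) → ℂ),
        ∀ I J, H I J = ∑ i, rankOne (u i) I J) :
    ∃ A : ((k : Fin m) → Fin (n k)) → ((k : Fin m) → Fin (n k)) → ℂ,
      IsHerm A ∧
      (∀ z : (k : Fin m) → Fin (n k) → ℂ, (∀ k, z k ≠ 0) → 0 < (ip A (rankOne z)).re) ∧
      (ip A H).re < 0 := by
  have hHC : H ∉ separableCone hm hn := fun hHC =>
    have ⟨r, u, hu⟩ := mem_separableCone.1 hHC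
    hsep ⟨r, u, fun I J => by simp [hu, Finset.sum_apply]⟩
  obtain ⟨f, hf, hfH⟩ := (separableCone hm hn).hyperplane_separation_point hHC
  obtain ⟨A, hA⟩ := exists_re_ip_eq f.toLinearMap
  obtain ⟨ε, hε, hεH⟩ := exists_pos_mul_lt (neg_pos.2 hfH) (traceRe H)
  have hre : ∀ X, IsHerm X → (ip (hermPart A + ε • idTensor) X).re = f X + ε * traceRe X :=
    fun X hX => by
      rw [ip_add_left, ip_smul_left, Complex.add_re, Complex.re_ofReal_mul, re_ip_hermPart A hX,
        hA, re_ip_idTensor, ContinuousLinearMap.coe_coe]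
  refine ⟨hermPart A + ε • idTensor, (isHerm_hermPart A).add (isHerm_idTensor.smul ε),
    fun z hz => ?_, ?_⟩
  · rw [hre _ (isHerm_rankOne z)]
    exact add_pos_of_nonneg_of_pos (hf _ (mem_separableCone.2 (isSeparable_rankOne z)))
      (mul_pos hε (traceRe_rankOne_pos hz))
  · rw [hre H hH]
    linarith

end HermitianTensorSeparatingHyperplane
end

section
/- Let H be a Hermitian tensor of format (n_1,…,n_m) and suppose the flattening tensor T(H) ∈ ℂ^{n_1² × ⋯ × n_m²} has tensor rank s and admits a decomposition T(H)_{(i_1,j_1),…,(i_m,j_m)} = Σ_{i=1}^s ∏_{k=1}^m (B_k^i)_{i_k j_k} where every B_k^i ∈ ℂ^{n_k×n_k} is a positive semidefinite Hermitian matrix. Then H is separable and its psd rank equals s. -/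
open scoped ComplexOrder

namespace HermitianTensorPsdRank

/-- The rank of an order-`m` complex tensor: the smallest number of rank-1 tensors
(outer products of vectors) summing to it. -/
noncomputable def tensorRank {m : ℕ} {ι : Fin m → Type} (T : ((j : Fin m) → ι j) → ℂ) : ℕ :=
  sInf {r | ∃ v : Fin r → (j : Fin m) → ι j → ℂ, ∀ p, T p = ∑ i, ∏ j, v i j (p j)}

variable {m : ℕ} {n : Fin m → ℕ}

/-- A Hermitian tensor is separable if it is a sum of rank-1 Hermitian tensors. -/
def IsSep (H : ((k : Fin m) → Fin (n k)) → ((k : Fin m) → Fin (n k)) → ℂ) : Prop :=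
  ∃ (r : ℕ) (u : (i : Fin r) → (k : Fin m) → Fin (n k) → ℂ),
    ∀ I J, H I J = ∑ i, ∏ k, u i k (I k) * (starRingEnd ℂ) (u i k (J k))

/-- The psd rank of a Hermitian tensor: the smallest length of a decomposition into
Kronecker products of psd Hermitian matrices. -/
noncomputable def psdRank (H : ((k : Fin m) → Fin (n k)) → ((k : Fin m) → Fin (n k)) → ℂ) : ℕ :=
  sInf {s | ∃ B : (i : Fin s) → (k : Fin m) → Matrix (Fin (n k)) (Fin (n k)) ℂ,
    (∀ i k, (B i k).PosSemidef) ∧ ∀ I J, H I J = ∑ i, ∏ k, B i k (I k) (J k)}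

/-! Writing each psd factor as a sum of rank-one matrices `v vᴴ` and expanding the product of
these sums exhibits `H` as separable. Conversely, every psd decomposition of `H` is in particular
a tensor decomposition of the flattening, so the psd rank is at least the tensor rank `s`. -/

def flattening (H : ((k : Fin m) → Fin (n k)) → ((k : Fin m) → Fin (n k)) → ℂ) :
    ((k : Fin m) → Fin (n k) × Fin (n k)) → ℂ :=
  fun p => H (fun k => (p k).1) (fun k => (p k).2)

section

variable {H : ((k : Fin m) → Fin (n k)) → ((k : Fin m) → Fin (n k)) → ℂ}

lemma isSep_of_eq_sum {ι : Type*} [Fintype ι] (u : ι → (k : Fin m) → Fin (n k) → ℂ)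
    (hu : ∀ I J, H I J = ∑ i, ∏ k, u i k (I k) * (starRingEnd ℂ) (u i k (J k))) :
    IsSep H := by
  let e := Fintype.equivFin ι
  refine ⟨Fintype.card ι, fun i => u (e.symm i), fun I J => ?_⟩
  rw [hu, ← e.symm.sum_comp]

lemma isSep_of_psd_decomposition {ι : Type*} [Fintype ι]
    {B : ι → (k : Fin m) → Matrix (Fin (n k)) (Fin (n k)) ℂ}
    (hB : ∀ i k, (B i k).PosSemidef)
    (hdec : ∀ I J, H I J = ∑ i, ∏ k, B i k (I k) (J k)) : IsSep H := by
  choose r v hv using fun i k => Matrix.posSemidef_iff_eq_sum_vecMulVec.mp (hB i k)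
  refine isSep_of_eq_sum (ι := Σ i, (k : Fin m) → Fin (r i k))
    (fun p k => v p.1 k (p.2 k)) fun I J => ?_
  have hB_entry : ∀ i k, B i k (I k) (J k) =
      ∑ l, v i k l (I k) * (starRingEnd ℂ) (v i k l (J k)) := by
    intro i k
    simp [hv i k, Matrix.sum_apply, Matrix.vecMulVec_apply]
  simp_rw [hdec, hB_entry, Fintype.prod_sum, Fintype.sum_sigma]

lemma psdRank_le {s : ℕ} {B : Fin s → (k : Fin m) → Matrix (Fin (n k)) (Fin (n k)) ℂ}
    (hB : ∀ i k, (B i k).PosSemidef) (hdec : ∀ I J, H I J = ∑ i, ∏ k, B i k (I k) (J k)) :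
    psdRank H ≤ s :=
  Nat.sInf_le ⟨B, hB, hdec⟩

lemma tensorRank_flattening_le {s : ℕ}
    (B : Fin s → (k : Fin m) → Matrix (Fin (n k)) (Fin (n k)) ℂ)
    (hdec : ∀ I J, H I J = ∑ i, ∏ k, B i k (I k) (J k)) :
    tensorRank (flattening H) ≤ s :=
  Nat.sInf_le ⟨fun i k q => B i k q.1 q.2, fun _ => hdec _ _⟩

lemma tensorRank_flattening_le_psdRank
    (h : ∃ s, ∃ B : Fin s → (k : Fin m) → Matrix (Fin (n k)) (Fin (n k)) ℂ,
      (∀ i k, (B i k).PosSemidef) ∧ ∀ I J, H I J = ∑ i, ∏ k, B i k (I k) (J k)) :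
    tensorRank (flattening H) ≤ psdRank H :=
  le_csInf h fun _ ⟨B, _, hB⟩ => tensorRank_flattening_le B hB

end

theorem separable_of_flattening_psd_rank_decomposition_general
    (m : ℕ) (n : Fin m → ℕ)
    (H : ((k : Fin m) → Fin (n k)) → ((k : Fin m) → Fin (n k)) → ℂ)
    (s : ℕ)
    (hrank : tensorRank (fun p : (k : Fin m) → Fin (n k) × Fin (n k) =>
        H (fun k => (p k).1) (fun k => (p k).2)) = s)
    (B : (i : Fin s) → (k : Fin m) → Matrix (Fin (n k)) (Fin (n k)) ℂ)
    (hpsd : ∀ i k, (B i k).PosSemidef)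
    (hdec : ∀ p : (k : Fin m) → Fin (n k) × Fin (n k),
        H (fun k => (p k).1) (fun k => (p k).2) = ∑ i, ∏ k, B i k (p k).1 (p k).2) :
    IsSep H ∧ psdRank H = s := by
  have hdec' : ∀ I J, H I J = ∑ i, ∏ k, B i k (I k) (J k) :=
    fun I J => hdec fun k => (I k, J k)
  have hrank : tensorRank (flattening H) = s := hrank
  refine ⟨isSep_of_psd_decomposition hpsd hdec', le_antisymm (psdRank_le hpsd hdec') ?_⟩
  exact hrank ▸ tensorRank_flattening_le_psdRank ⟨s, B, hpsd, hdec'⟩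

/-- If the flattening tensor `T(H)` has tensor rank `s` and admits a length-`s`
decomposition by psd Hermitian matrices, then `H` is separable with psd rank `s`. -/
theorem separable_of_flattening_psd_rank_decomposition
    (m : ℕ) (hm : 1 ≤ m) (n : Fin m → ℕ) (hn : ∀ k, 1 ≤ n k)
    (H : ((k : Fin m) → Fin (n k)) → ((k : Fin m) → Fin (n k)) → ℂ)
    (hH : ∀ I J, H I J = (starRingEnd ℂ) (H J I))
    (s : ℕ)
    (hrank : tensorRank (fun p : (k : Fin m) → Fin (n k) × Fin (n k) =>
        H (fun k => (p k).1) (fun k => (p k).2)) = s)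
    (B : (i : Fin s) → (k : Fin m) → Matrix (Fin (n k)) (Fin (n k)) ℂ)
    (hpsd : ∀ i k, (B i k).PosSemidef)
    (hdec : ∀ p : (k : Fin m) → Fin (n k) × Fin (n k),
        H (fun k => (p k).1) (fun k => (p k).2) = ∑ i, ∏ k, B i k (p k).1 (p k).2) :
    IsSep H ∧ psdRank H = s :=
  separable_of_flattening_psd_rank_decomposition_general m n H s hrank B hpsd hdec

end HermitianTensorPsdRank
end

section
/- Let H be a Hermitian tensor of format (n_1,…,n_m) that is ℝ-Hermitian decomposable, i.e., there exist r ≥ 0, real scalars λ_i ∈ ℝ, and real vectors u_i^j ∈ ℝ^{n_j} with H = Σ_{i=1}^r λ_i [u_i^1,…,u_i^m]_⊗h (in particular all entries of H are real). Then H is ℝ-separable, meaning H = Σ_{i=1}^{r'} [v_i^1,…,v_i^m]_⊗h for some real vectors v_i^j ∈ ℝ^{n_j}, if and only if H is ℂ-separable, meaning H = Σ_{i=1}^{r''} [w_i^1,…,w_i^m]_⊗h for some complex vectors w_i^j ∈ ℂ^{n_j}. -/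
/-!
Averaging a tensor over its `2^m` partial transposes leaves a real-decomposable tensor unchanged,
because each real factor `u(i) u(j)` is symmetric. Averaging a complex rank-one Hermitian tensor
`∏ₖ wₖ(iₖ) conj wₖ(jₖ)` instead replaces every factor by its real part
`Re wₖ(iₖ) Re wₖ(jₖ) + Im wₖ(iₖ) Im wₖ(jₖ)`, and expanding the product of these sums writes it
as a sum of `2^m` real rank-one tensors.
-/

open Finset ComplexConjugate

namespace HermitianTensor

variable {κ : Type*} [Fintype κ] {α : κ → Type*}

/-- `(swapAt ε I J, swapAt ε J I)` is the partial transpose of `(I, J)` in the coordinates where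
`ε` holds. -/
def swapAt (ε : κ → Bool) (I J : ∀ k, α k) : ∀ k, α k := fun k => bif ε k then J k else I k

theorem prod_swapAt_of_symm {R : Type*} [CommMonoid R] (g : ∀ k, α k → α k → R)
    (hg : ∀ k a b, g k a b = g k b a) (ε : κ → Bool) (I J : ∀ k, α k) :
    ∏ k, g k (swapAt ε I J k) (swapAt ε J I k) = ∏ k, g k (I k) (J k) :=
  prod_congr rfl fun k _ => by unfold swapAt; cases ε k <;> simp [hg]

theorem sum_prod_swapAt [DecidableEq κ] {R : Type*} [CommSemiring R] (g : ∀ k, α k → α k → R)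
    (I J : ∀ k, α k) :
    ∑ ε : κ → Bool, ∏ k, g k (swapAt ε I J k) (swapAt ε J I k)
      = ∏ k, (g k (I k) (J k) + g k (J k) (I k)) := by
  calc ∑ ε : κ → Bool, ∏ k, g k (swapAt ε I J k) (swapAt ε J I k)
      = ∏ k, ∑ b : Bool, g k (bif b then J k else I k) (bif b then I k else J k) :=
        (Fintype.prod_sum fun k b =>
          g k (bif b then J k else I k) (bif b then I k else J k)).symm
    _ = ∏ k, (g k (I k) (J k) + g k (J k) (I k)) := by
        simp only [Fintype.sum_bool, cond_true, cond_false, add_comm]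

theorem apply_swapAt_of_real_decomposition {ι : Type*} [Fintype ι]
    (H : (∀ k, α k) → (∀ k, α k) → ℂ) (c : ι → ℂ) (u : ι → ∀ k, α k → ℝ)
    (hdec : ∀ I J, H I J = ∑ i, c i * ∏ k, (u i k (I k) : ℂ) * (u i k (J k) : ℂ))
    (ε : κ → Bool) (I J : ∀ k, α k) :
    H (swapAt ε I J) (swapAt ε J I) = H I J := by
  simp only [hdec]
  refine sum_congr rfl fun i _ => congrArg _ ?_
  exact prod_swapAt_of_symm (fun k a b => (u i k a : ℂ) * u i k b) (fun _ _ _ => mul_comm _ _) ε I J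

def reIm (b : Bool) (z : ℂ) : ℝ := bif b then z.im else z.re

theorem mul_conj_add_mul_conj (z w : ℂ) :
    z * conj w + w * conj z = 2 * ∑ b : Bool, (reIm b z : ℂ) * reIm b w := by
  apply Complex.ext <;> simp [reIm, Complex.mul_re, Complex.mul_im] <;> ring

theorem sum_prod_swapAt_mul_conj [DecidableEq κ] (w : ∀ k, α k → ℂ) (I J : ∀ k, α k) :
    ∑ ε : κ → Bool, ∏ k, w k (swapAt ε I J k) * conj (w k (swapAt ε J I k))
      = 2 ^ Fintype.card κ *
        ∑ s : κ → Bool, ∏ k, (reIm (s k) (w k (I k)) : ℂ) * reIm (s k) (w k (J k)) := by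
  rw [sum_prod_swapAt (fun k a b => w k a * conj (w k b))]
  simp only [mul_conj_add_mul_conj, prod_mul_distrib, prod_const, card_univ, Fintype.prod_sum]

theorem eq_sum_reIm_of_swapAt_invariant [DecidableEq κ] {ι : Type*} [Fintype ι]
    (H : (∀ k, α k) → (∀ k, α k) → ℂ)
    (hswap : ∀ ε I J, H (swapAt ε I J) (swapAt ε J I) = H I J)
    (w : ι → ∀ k, α k → ℂ) (hw : ∀ I J, H I J = ∑ a, ∏ k, w a k (I k) * conj (w a k (J k)))
    (I J : ∀ k, α k) :
    H I J = ∑ p : ι × (κ → Bool),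
      ∏ k, (reIm (p.2 k) (w p.1 k (I k)) : ℂ) * reIm (p.2 k) (w p.1 k (J k)) := by
  have hcard : (2 : ℂ) ^ Fintype.card κ ≠ 0 := pow_ne_zero _ two_ne_zero
  have hsum : ∑ ε : κ → Bool, H (swapAt ε I J) (swapAt ε J I) = 2 ^ Fintype.card κ * H I J := by
    simp [hswap, mul_comm]
  apply mul_left_cancel₀ hcard
  rw [← hsum, Fintype.sum_prod_type, mul_sum]
  simp only [hw]
  rw [sum_comm]
  exact sum_congr rfl fun a _ => sum_prod_swapAt_mul_conj (w a) I J

end HermitianTensor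

theorem real_separable_iff_complex_separable_general
    (m : ℕ) (n : Fin m → ℕ)
    (H : ((k : Fin m) → Fin (n k)) → ((k : Fin m) → Fin (n k)) → ℂ)
    (r : ℕ) (lam : Fin r → ℝ) (u : (i : Fin r) → (k : Fin m) → Fin (n k) → ℝ)
    (hdec : ∀ I J, H I J = ∑ i, (lam i : ℂ) *
        ∏ k, (u i k (I k) : ℂ) * (u i k (J k) : ℂ)) :
    (∃ (r' : ℕ) (v : (i : Fin r') → (k : Fin m) → Fin (n k) → ℝ),
        ∀ I J, H I J = ∑ i, ∏ k, (v i k (I k) : ℂ) * (v i k (J k) : ℂ))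
      ↔
    (∃ (r'' : ℕ) (w : (i : Fin r'') → (k : Fin m) → Fin (n k) → ℂ),
        ∀ I J, H I J = ∑ i, ∏ k, w i k (I k) * (starRingEnd ℂ) (w i k (J k))) := by
  constructor
  · rintro ⟨r', v, hv⟩
    exact ⟨r', fun i k j => v i k j, fun I J => by simp [hv, Complex.conj_ofReal]⟩
  · rintro ⟨r'', w, hw⟩
    let e := (Fintype.equivFin (Fin r'' × (Fin m → Bool))).symm
    refine ⟨_, fun i k j => HermitianTensor.reIm ((e i).2 k) (w (e i).1 k j), fun I J => ?_⟩
    rw [HermitianTensor.eq_sum_reIm_of_swapAt_invariant H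
      (HermitianTensor.apply_swapAt_of_real_decomposition H (fun i => (lam i : ℂ)) u hdec) w hw I J]
    exact (e.sum_comp _).symm

/-- For an ℝ-Hermitian decomposable tensor (a real linear combination of rank-1
Hermitian tensors of real vectors), ℝ-separability is equivalent to ℂ-separability. -/
theorem real_separable_iff_complex_separable
    (m : ℕ) (hm : 1 ≤ m) (n : Fin m → ℕ) (hn : ∀ k, 1 ≤ n k)
    (H : ((k : Fin m) → Fin (n k)) → ((k : Fin m) → Fin (n k)) → ℂ)
    (r : ℕ) (lam : Fin r → ℝ) (u : (i : Fin r) → (k : Fin m) → Fin (n k) → ℝ)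
    (hdec : ∀ I J, H I J = ∑ i, (lam i : ℂ) *
        ∏ k, (u i k (I k) : ℂ) * (u i k (J k) : ℂ)) :
    (∃ (r' : ℕ) (v : (i : Fin r') → (k : Fin m) → Fin (n k) → ℝ),
        ∀ I J, H I J = ∑ i, ∏ k, (v i k (I k) : ℂ) * (v i k (J k) : ℂ))
      ↔
    (∃ (r'' : ℕ) (w : (i : Fin r'') → (k : Fin m) → Fin (n k) → ℂ),
        ∀ I J, H I J = ∑ i, ∏ k, w i k (I k) * (starRingEnd ℂ) (w i k (J k))) :=
  real_separable_iff_complex_separable_general m n H r lam u hdec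
end
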